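/- arXiv:1309.0403 — 3 statements merged into one kernel-verified Lean document; each statement's English description precedes it below -/
import Mathlib

section
/- Let q be a prime power, let 0 < k', k ≤ n, let U₀ = rs[ I_{k'} | 0_{k'×(n−k')} ] be the row space of the k'×n matrix whose left block is the identity and right block is zero, and let τ satisfy |k − k'| ≤ τ < min(k' + k, 2n − (k' + k)) with (k + k' − τ)/2 ∈ ℤ. Then for every k×n matrix V over F_q of rank k, the subspace rs(V) satisfies d_S(U₀, rs(V)) ≤ τ if and only if M_{i₁,…,i_k}(V) = 0 for every index tuple (i₁ < … < i_k) that is NOT ⪯ ((k'−k+τ)/2 + 1, …, k', n − (k−k'+τ)/2 + 1, …, n) in the Bruhat order; equivalently, if and only if every k×k minor of V whose column set contains at least (k−k'+τ)/2 + 1 columns with index greater than k' vanishes. -/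
/-!
`U₀` is the kernel of the restriction `F^n → F^{n-k'}` to the last `n - k'` coordinates, so
rank–nullity on `rs V` gives `dim (U₀ ∩ rs V) = k - r`, where `r` is the rank of the last `n - k'`
columns of `V`. Hence `d_S(U₀, rs V) = k' - k + 2r`, and the distance condition reads
`r ≤ (k - k' + τ) / 2`. As `V` has rank `k`, a basis of the span of its last `n - k'` columns
extends by further columns to `k` independent columns, i.e. to a nonvanishing maximal minor
with `r` columns among the last `n - k'`; conversely a nonvanishing maximal minor has
independent columns, so at most `r` of them lie among the last `n - k'`.
-/

/-- The standard subspace `U₀ = rs [I_{k'} | 0]`, spanned by the first `k'`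
standard basis vectors of `F^n`. -/
def stdSubspace (F : Type*) [Field F] (n k' : ℕ) (h : k' ≤ n) :
    Submodule F (Fin n → F) :=
  Submodule.span F
    (Set.range fun i : Fin k' => (Pi.single (Fin.castLE h i) (1 : F) : Fin n → F))

/-- The row space of a matrix. -/
def rowSpace (F : Type*) [Field F] {k n : ℕ} (M : Matrix (Fin k) (Fin n) F) :
    Submodule F (Fin n → F) :=
  Submodule.span F (Set.range fun i : Fin k => M i)

open Module Submodule Matrix Finset

section LinearAlgebra

variable {K M N : Type*} [Field K] [AddCommGroup M] [Module K M] [AddCommGroup N] [Module K N]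

theorem Submodule.finrank_map_add_finrank_ker_inf (f : M →ₗ[K] N) (P : Submodule K M)
    [FiniteDimensional K P] :
    finrank K (P.map f) + finrank K ↥(LinearMap.ker f ⊓ P) = finrank K P := by
  rw [← (f.domRestrict P).finrank_range_add_finrank_ker, LinearMap.range_domRestrict,
    LinearMap.ker_domRestrict, ← Submodule.finrank_map_subtype_eq P, map_comap_subtype, inf_comm]

theorem LinearMap.ker_funLeft_subtype {η : Type*} [Finite η] (p : η → Prop) :
    LinearMap.ker (LinearMap.funLeft K K (Subtype.val : {i // p i} → η))
      = Pi.spanSubset K {i | ¬ p i} := by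
  ext v
  simp [Pi.mem_spanSubset_iff, funext_iff, LinearMap.funLeft_apply]

variable {ι : Type*} {v : ι → M}

theorem LinearIndepOn.finrank_span_image {s : Finset ι} (hs : LinearIndepOn K v s) :
    finrank K (span K (v '' s)) = #s := by
  rw [Set.image_eq_range, finrank_span_eq_card hs]
  simp

variable [Fintype ι] (p : ι → Prop) [DecidablePred p]

theorem LinearIndependent.card_filter_le_finrank_span {κ : Type*} [Fintype κ] {c : κ → ι}
    (hc : LinearIndependent K (v ∘ c)) :
    #{l | p (c l)} ≤ finrank K (span K (Set.range fun i : {i // p i} => v i)) := by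
  have := Module.Finite.span_of_finite K (Set.finite_range fun i : {i // p i} => v i)
  have hsub : LinearIndependent K fun l : {l // p (c l)} => v (c l) :=
    hc.comp Subtype.val Subtype.val_injective
  rw [← Fintype.card_subtype, ← finrank_span_eq_card hsub]
  exact Submodule.finrank_mono (span_mono fun _ ⟨l, hl⟩ => ⟨⟨c l, l.2⟩, hl⟩)

theorem exists_linearIndepOn_card_eq_finrank_le_card_filter :
    ∃ I : Finset ι, LinearIndepOn K v I ∧ #I = finrank K (span K (Set.range v)) ∧
      finrank K (span K (Set.range fun i : {i // p i} => v i)) ≤ #{i ∈ I | p i} := by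
  obtain ⟨J, hJp, -, hJspan, hJ⟩ :=
    exists_linearIndepOn_extension (linearIndepOn_empty K v) (Set.empty_subset {i | p i})
  obtain ⟨I, -, hJI, hIspan, hI⟩ := exists_linearIndepOn_extension hJ (Set.subset_univ J)
  lift J to Finset ι using Set.toFinite J
  lift I to Finset ι using Set.toFinite I
  refine ⟨I, hI, ?_, ?_⟩
  · have hIspan' : span K (v '' I) = span K (Set.range v) := by
      rw [← Set.image_univ]
      exact le_antisymm (span_mono (Set.image_mono (Set.subset_univ _))) (span_le.2 hIspan)
    rw [← hI.finrank_span_image, hIspan']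
  · have hJspan' : span K (Set.range fun i : {i // p i} => v i) = span K (v '' J) :=
      le_antisymm (span_le.2 fun _ ⟨i, hi⟩ => hJspan ⟨i, i.2, hi⟩)
        (span_mono fun _ ⟨i, hi, hvi⟩ => ⟨⟨i, hJp hi⟩, hvi⟩)
    rw [hJspan', hJ.finrank_span_image]
    exact card_le_card fun i hi => mem_filter.2 ⟨by exact_mod_cast hJI hi, hJp hi⟩

end LinearAlgebra

section Minors

variable {F : Type*} [Field F]

theorem Matrix.det_submatrix_ne_zero_iff {m ι : Type*} [Fintype m] [DecidableEq m]
    (V : Matrix m ι F) (c : m → ι) :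
    (V.submatrix id c).det ≠ 0 ↔ LinearIndependent F (V.col ∘ c) := by
  rw [← isUnit_iff_ne_zero, ← isUnit_iff_isUnit_det, ← linearIndependent_cols_iff_isUnit]
  rfl

theorem Matrix.rank_submatrix_le_iff_det_eq_zero {k : ℕ} {ι : Type*} [Fintype ι]
    [LinearOrder ι] (V : Matrix (Fin k) ι F) (hV : V.rank = k) (p : ι → Prop) [DecidablePred p]
    (t : ℕ) :
    (V.submatrix id (Subtype.val : {j // p j} → ι)).rank ≤ t ↔
      ∀ c : Fin k → ι, StrictMono c → t + 1 ≤ #{l | p (c l)} →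
        (V.submatrix id c).det = 0 := by
  rw [rank_eq_finrank_span_cols]
  change finrank F (span F (Set.range fun j : {j // p j} => V.col j)) ≤ t ↔ _
  constructor
  · intro hr c _ hcard
    by_contra hdet
    have := ((V.det_submatrix_ne_zero_iff c).1 hdet).card_filter_le_finrank_span p
    omega
  · intro h
    by_contra! hr
    obtain ⟨I, hI, hIcard, hIp⟩ :=
      exists_linearIndepOn_card_eq_finrank_le_card_filter (K := F) (v := V.col) p
    rw [← rank_eq_finrank_span_cols, hV] at hIcard
    set c := I.orderEmbOfFin hIcard
    have hfilter : #{l | p (c l)} = #{i ∈ I | p i} := by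
      rw [← I.map_orderEmbOfFin_univ hIcard, filter_map, card_map]
      rfl
    refine (V.det_submatrix_ne_zero_iff c).2 ?_ (h c c.strictMono (by omega))
    exact hI.comp _ (I.orderIsoOfFin hIcard).injective

end Minors

section SubspaceDistance

variable {F : Type*} [Field F] {n k k' : ℕ}

theorem stdSubspace_eq_spanSubset (h : k' ≤ n) :
    stdSubspace F n k' h = Pi.spanSubset F {j : Fin n | ¬ k' ≤ (j : ℕ)} := by
  simp_rw [stdSubspace, Pi.spanSubset, not_le, ← Fin.range_castLE h, ← Set.range_comp]
  congr 1
  ext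
  simp [Function.comp_def]

theorem finrank_stdSubspace (h : k' ≤ n) : finrank F (stdSubspace F n k' h) = k' := by
  rw [stdSubspace_eq_spanSubset, Pi.dim_spanSubset]
  simp_rw [not_le, ← Fin.range_castLE h]
  rw [Set.ncard_range_of_injective (Fin.castLE_injective h), Nat.card_fin]

theorem finrank_rowSpace (V : Matrix (Fin k) (Fin n) F) : finrank F (rowSpace F V) = V.rank :=
  (rank_eq_finrank_span_row V).symm

theorem finrank_stdSubspace_inf_rowSpace_add_rank_submatrix (h : k' ≤ n)
    (V : Matrix (Fin k) (Fin n) F) :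
    finrank F ↥(stdSubspace F n k' h ⊓ rowSpace F V)
      + (V.submatrix id (Subtype.val : {j : Fin n // k' ≤ (j : ℕ)} → Fin n)).rank
      = V.rank := by
  have key := (rowSpace F V).finrank_map_add_finrank_ker_inf
    (LinearMap.funLeft F F (Subtype.val : {j : Fin n // k' ≤ (j : ℕ)} → Fin n))
  rw [LinearMap.ker_funLeft_subtype, ← stdSubspace_eq_spanSubset h, finrank_rowSpace] at key
  rw [← key, add_comm, rank_eq_finrank_span_row, rowSpace, map_span, ← Set.range_comp]
  rfl

end SubspaceDistance

theorem statement7_general (F : Type*) [Field F] (n k k' τ : ℕ)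
    (hk'n : k' ≤ n)
    (hτ2 : (k' : ℤ) - (k : ℤ) ≤ (τ : ℤ))
    (V : Matrix (Fin k) (Fin n) F) (hV : V.rank = k) :
    ((Module.finrank F ↥(stdSubspace F n k' hk'n) : ℤ)
        + Module.finrank F ↥(rowSpace F V)
        - 2 * Module.finrank F ↥(stdSubspace F n k' hk'n ⊓ rowSpace F V)
      ≤ (τ : ℤ))
    ↔ ∀ c : Fin k → Fin n, StrictMono c →
        (k + τ - k') / 2 + 1 ≤
          (Finset.univ.filter fun l : Fin k => k' ≤ (c l : ℕ)).card →
        (V.submatrix id c).det = 0 := by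
  rw [← V.rank_submatrix_le_iff_det_eq_zero hV (fun j => k' ≤ (j : ℕ)), finrank_stdSubspace,
    finrank_rowSpace]
  have := finrank_stdSubspace_inf_rowSpace_add_rank_submatrix hk'n V
  omega

/-- Theorem 3 (subspace distance): for `U₀ = rs[I_{k'} | 0]` and
`|k-k'| ≤ τ < min(k'+k, 2n-(k'+k))` with `k+k'-τ` even, a rank-`k` matrix `V`
satisfies `d_S(U₀, rs V) ≤ τ` iff every `k×k` minor of `V` whose column set
contains at least `(k-k'+τ)/2 + 1` columns with index greater than `k'`
vanishes (equivalently, iff `M_{i₁,…,i_k}(V) = 0` for every tuple which is not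
`⪯ ((k'-k+τ)/2+1, …, k', n-(k-k'+τ)/2+1, …, n)` in the Bruhat order). -/
theorem statement7 (F : Type*) [Field F] [Fintype F] (n k k' τ : ℕ)
    (hk : 0 < k) (hk' : 0 < k') (hkn : k ≤ n) (hk'n : k' ≤ n)
    (hτ1 : (k : ℤ) - (k' : ℤ) ≤ (τ : ℤ)) (hτ2 : (k' : ℤ) - (k : ℤ) ≤ (τ : ℤ))
    (hτ3 : (τ : ℤ) < min ((k' : ℤ) + (k : ℤ)) (2 * (n : ℤ) - ((k' : ℤ) + (k : ℤ))))
    (hpar : Even ((k : ℤ) + (k' : ℤ) - (τ : ℤ)))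
    (V : Matrix (Fin k) (Fin n) F) (hV : V.rank = k) :
    ((Module.finrank F ↥(stdSubspace F n k' hk'n) : ℤ)
        + Module.finrank F ↥(rowSpace F V)
        - 2 * Module.finrank F ↥(stdSubspace F n k' hk'n ⊓ rowSpace F V)
      ≤ (τ : ℤ))
    ↔ ∀ c : Fin k → Fin n, StrictMono c →
        (k + τ - k') / 2 + 1 ≤
          (Finset.univ.filter fun l : Fin k => k' ≤ (c l : ℕ)).card →
        (V.submatrix id c).det = 0 :=
  statement7_general F n k k' τ hk'n hτ2 V hV
end

section
/- Let q be a prime power, let 0 < k', k ≤ n, let A be an invertible n×n matrix over F_q with block decomposition A = [[R₁, R₂],[R₃, R₄]] where R₁ ∈ F_q^{k'×k'} and R₂ ∈ F_q^{k'×(n−k')}, and let R = rs[ R₁ | R₂ ] = rs([ I_{k'} | 0 ]·A). Let τ satisfy |k−k'| ≤ τ with (k+k'−τ)/2 ∈ ℤ and set ν = (k−k'+τ)/2. Then a k-dimensional subspace 𝒱 of F_q^n satisfies d_S(R, 𝒱) ≤ τ if and only if there exist V₁ ∈ F_q^{k×k'}, X ∈ F_q^{k×ν}, Y ∈ F_q^{ν×(n−k')}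 such that 𝒱 = rs[ V₁R₁ + XY·R₃ | V₁R₂ + XY·R₄ ] (and the latter matrix has rank k). -/
/-!
Right multiplication by `A⁻¹` carries `R` to the row space `W` of `[I | 0]` and `𝒱` to the row
space of some `[U₁ | U₂]` of rank `k`. Since `W` is the kernel of the projection onto the last
`m` coordinates, which maps the row space of `[U₁ | U₂]` onto that of `U₂`, rank–nullity gives
`dim (R ⊓ 𝒱) = k - rank U₂`, i.e. `d_S(R, 𝒱) = k' - k + 2 rank U₂`. So the ball condition says
`rank U₂ ≤ ν`, which is exactly `U₂ = X * Y` with inner dimension `ν`; and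
`[U₁ | X Y] * A = [U₁ R₁ + X Y R₃ | U₁ R₂ + X Y R₄]`.
-/

open Matrix Submodule Module

theorem Submodule.span_range_basis_coe {R ι M : Type*} [Semiring R] [AddCommMonoid M]
    [Module R M] (p : Submodule R M) (b : Basis ι R p) :
    span R (Set.range fun i => (b i : M)) = p :=
  calc span R (Set.range fun i => (b i : M)) = (span R (Set.range b)).map p.subtype := by
        rw [map_span, ← Set.range_comp]; rfl
    _ = p := by rw [b.span_eq, map_subtype_top]

namespace Matrix

variable {R ι κ η : Type*} [CommSemiring R]

theorem span_range_mul_row [Fintype κ] (M : Matrix η κ R) (A : Matrix κ ι R) :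
    span R (Set.range (M * A).row) = (span R (Set.range M.row)).map A.vecMulLinear := by
  rw [map_span, ← Set.range_comp]
  rfl

theorem span_range_fromCols_one_zero_row [Fintype ι] [DecidableEq ι] :
    span R (Set.range (fromCols (1 : Matrix ι ι R) (0 : Matrix ι κ R)).row) =
      LinearMap.ker (LinearMap.funLeft R R Sum.inr) := by
  rw [← range_vecMulLinear]
  ext v
  constructor
  · rintro ⟨w, rfl⟩
    ext j
    simp [vecMul_fromCols]
  · intro hv
    refine ⟨v ∘ Sum.inl, ?_⟩
    ext (i | j)
    · simp [vecMul_fromCols]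
    · simpa [vecMul_fromCols] using (congrFun hv j).symm

theorem map_funLeft_inr_span_range_fromCols_row (U₁ : Matrix η ι R) (U₂ : Matrix η κ R) :
    (span R (Set.range (fromCols U₁ U₂).row)).map (LinearMap.funLeft R R Sum.inr) =
      span R (Set.range U₂.row) := by
  rw [map_span, ← Set.range_comp]
  rfl

end Matrix

section

variable {F : Type*} [Field F]

theorem LinearMap.finrank_inf_ker_add_finrank_map {V W : Type*} [AddCommGroup V] [Module F V]
    [AddCommGroup W] [Module F W] (f : V →ₗ[F] W) (p : Submodule F V) [FiniteDimensional F p] :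
    finrank F ↥(p ⊓ ker f) + finrank F ↥(p.map f) = finrank F p := by
  rw [← range_domRestrict, ← (f.domRestrict p).finrank_range_add_finrank_ker, add_comm,
    ker_domRestrict]
  congr 1
  rw [← (comapSubtypeEquivOfLe (inf_le_left : p ⊓ ker f ≤ p)).finrank_eq, comap_inf,
    comap_subtype_self, top_inf_eq]

namespace Matrix

variable {ι κ η : Type*}

theorem exists_rank_eq_and_span_range_row_eq [Fintype ι] (V : Submodule F (ι → F)) {k : ℕ}
    (hV : finrank F V = k) :
    ∃ M : Matrix (Fin k) ι F, M.rank = k ∧ span F (Set.range M.row) = V := by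
  let b := finBasisOfFinrankEq F V hV
  refine ⟨of fun i => b i, ?_, V.span_range_basis_coe b⟩
  exact (b.linearIndependent.map' V.subtype V.ker_subtype).rank_matrix.trans (Fintype.card_fin k)

theorem exists_eq_mul_of_rank_le [Fintype η] [Fintype ι] {ν : ℕ} (U : Matrix η ι F)
    (h : U.rank ≤ ν) : ∃ (X : Matrix η (Fin ν) F) (Y : Matrix (Fin ν) ι F), U = X * Y := by
  set S := span F (Set.range U.row)
  have hS : finrank F S ≤ ν := U.rank_eq_finrank_span_row ▸ h
  let b := Module.finBasis F S
  let Y : Matrix (Fin ν) ι F := of fun j => if hj : (j : ℕ) < finrank F S then b ⟨j, hj⟩ else 0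
  have hSY : S ≤ span F (Set.range Y.row) := by
    rw [← S.span_range_basis_coe b]
    refine span_mono fun _ ⟨l, hl⟩ => ⟨⟨l, l.2.trans_le hS⟩, ?_⟩
    simp [Y, ← hl]
  have hrow (i : η) : ∃ c : Fin ν → F, c ᵥ* Y = U i := by
    simp only [vecMul_eq_sum]
    exact (mem_span_range_iff_exists_fun F).mp (hSY (subset_span ⟨i, rfl⟩))
  choose X hX using hrow
  exact ⟨of X, Y, ext fun i j => congrFun (hX i).symm j⟩

theorem rank_fromCols_one_zero [Fintype ι] [Fintype κ] [DecidableEq ι] :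
    (fromCols (1 : Matrix ι ι F) (0 : Matrix ι κ F)).rank = Fintype.card ι := by
  refine le_antisymm (rank_le_card_height _) ?_
  simpa [fromCols_mul_fromRows] using
    rank_mul_le_left (fromCols (1 : Matrix ι ι F) (0 : Matrix ι κ F))
      (fromRows 1 (0 : Matrix κ ι F))

theorem finrank_span_range_mul_row_of_isUnit [Fintype ι] [Fintype κ] [DecidableEq κ]
    {A : Matrix κ κ F} (hA : IsUnit A) (M : Matrix ι κ F) :
    finrank F (span F (Set.range (M * A).row)) = M.rank := by
  rw [← rank_eq_finrank_span_row, rank_mul_eq_left_of_isUnit_det A M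
    ((isUnit_iff_isUnit_det A).mp hA)]

theorem finrank_span_inf_add_rank [Fintype ι] [Fintype κ] [Fintype η]
    [DecidableEq ι] [DecidableEq κ] {A : Matrix (ι ⊕ κ) (ι ⊕ κ) F} (hA : IsUnit A)
    (U₁ : Matrix η ι F) (U₂ : Matrix η κ F) :
    finrank F ↥(span F (Set.range (fromCols (1 : Matrix ι ι F) (0 : Matrix ι κ F) * A).row) ⊓
        span F (Set.range (fromCols U₁ U₂ * A).row)) + U₂.rank =
      finrank F (span F (Set.range (fromCols U₁ U₂ * A).row)) := by
  have hinj : Function.Injective A.vecMulLinear :=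
    isRightRegular_iff_vecMul_injective.mp hA.isRegular.right
  rw [finrank_span_range_mul_row_of_isUnit hA, span_range_mul_row, span_range_mul_row,
    ← map_inf _ hinj, ← (equivMapOfInjective _ hinj _).finrank_eq, rank_eq_finrank_span_row,
    rank_eq_finrank_span_row, span_range_fromCols_one_zero_row,
    ← map_funLeft_inr_span_range_fromCols_row U₁ U₂, inf_comm,
    LinearMap.finrank_inf_ker_add_finrank_map]

end Matrix

end

theorem statement15_general (F : Type*) [Field F] (k k' m τ : ℕ)
    (R₁ : Matrix (Fin k') (Fin k') F) (R₂ : Matrix (Fin k') (Fin m) F)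
    (R₃ : Matrix (Fin m) (Fin k') F) (R₄ : Matrix (Fin m) (Fin m) F)
    (hA : IsUnit (Matrix.fromBlocks R₁ R₂ R₃ R₄))
    (hτ2 : (k' : ℤ) - (k : ℤ) ≤ (τ : ℤ))
    (𝒱 : Submodule F (Fin k' ⊕ Fin m → F)) (h𝒱 : Module.finrank F 𝒱 = k) :
    ((Module.finrank F
          ↥(Submodule.span F
              (Set.range fun i : Fin k' => Matrix.fromCols R₁ R₂ i)) : ℤ)
        + Module.finrank F 𝒱
        - 2 * Module.finrank F
            ↥(Submodule.span F
                (Set.range fun i : Fin k' => Matrix.fromCols R₁ R₂ i) ⊓ 𝒱)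
      ≤ (τ : ℤ))
    ↔ ∃ (V₁ : Matrix (Fin k) (Fin k') F)
        (X : Matrix (Fin k) (Fin ((k + τ - k') / 2)) F)
        (Y : Matrix (Fin ((k + τ - k') / 2)) (Fin m) F),
        𝒱 = Submodule.span F (Set.range fun i : Fin k =>
            Matrix.fromCols (V₁ * R₁ + X * Y * R₃) (V₁ * R₂ + X * Y * R₄) i)
        ∧ (Matrix.fromCols (V₁ * R₁ + X * Y * R₃)
            (V₁ * R₂ + X * Y * R₄)).rank = k := by
  set A := fromBlocks R₁ R₂ R₃ R₄
  have hblock (V₁ : Matrix (Fin k) (Fin k') F) (Z : Matrix (Fin k) (Fin m) F) :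
      fromCols (V₁ * R₁ + Z * R₃) (V₁ * R₂ + Z * R₄) = fromCols V₁ Z * A :=
    (fromCols_mul_fromBlocks ..).symm
  set R := span F (Set.range fun i => fromCols R₁ R₂ i)
  have hR : R = span F (Set.range
      (fromCols (1 : Matrix (Fin k') (Fin k') F) (0 : Matrix (Fin k') (Fin m) F) * A).row) := by
    simp only [A, fromCols_mul_fromBlocks, Matrix.one_mul, Matrix.zero_mul, add_zero]
    rfl
  have hdim_inf (V₁ : Matrix (Fin k) (Fin k') F) (Z : Matrix (Fin k) (Fin m) F)
      (h : 𝒱 = span F (Set.range (fromCols V₁ Z * A).row)) :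
      finrank F ↥(R ⊓ 𝒱) + Z.rank = k := by
    rw [hR, h, finrank_span_inf_add_rank hA, ← h, h𝒱]
  rw [hR, finrank_span_range_mul_row_of_isUnit hA, rank_fromCols_one_zero, Fintype.card_fin,
    ← hR, h𝒱]
  constructor
  · intro hle
    obtain ⟨M, hM_rank, hM_span⟩ := exists_rank_eq_and_span_range_row_eq 𝒱 h𝒱
    obtain ⟨B, hBA⟩ := hA.exists_left_inv
    have hMBA : fromCols (M * B).toCols₁ (M * B).toCols₂ * A = M := by
      rw [fromCols_toCols, Matrix.mul_assoc, hBA, Matrix.mul_one]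
    have hdim := hdim_inf _ _ (by rw [hMBA, hM_span])
    obtain ⟨X, Y, hXY⟩ :=
      exists_eq_mul_of_rank_le (M * B).toCols₂ (ν := (k + τ - k') / 2) (by omega)
    refine ⟨(M * B).toCols₁, X, Y, ?_⟩
    rw [hblock, ← hXY, hMBA]
    exact ⟨hM_span.symm, hM_rank⟩
  · rintro ⟨V₁, X, Y, h, -⟩
    have hdim := hdim_inf V₁ (X * Y) (by rw [h, hblock]; rfl)
    have hXY_rank := (rank_mul_le_right X Y).trans (rank_le_height Y)
    omega

/-- Rational parametrization of the ball around an arbitrary subspace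
`R = rs[R₁ | R₂] = rs([I_{k'} | 0]·A)` where `A = [[R₁,R₂],[R₃,R₄]]` is
invertible: for `|k-k'| ≤ τ` with `k+k'-τ` even and `ν = (k-k'+τ)/2`, a
`k`-dimensional subspace `𝒱` of `F^n` (with `n = k' + m`) satisfies
`d_S(R, 𝒱) ≤ τ` iff there exist `V₁ ∈ F^{k×k'}`, `X ∈ F^{k×ν}`,
`Y ∈ F^{ν×m}` with `𝒱 = rs[V₁R₁ + XY·R₃ | V₁R₂ + XY·R₄]`, the latter matrix
having rank `k`. -/
theorem statement15 (F : Type*) [Field F] [Fintype F] (k k' m τ : ℕ)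
    (hk : 0 < k) (hk' : 0 < k') (hkm : k ≤ k' + m)
    (R₁ : Matrix (Fin k') (Fin k') F) (R₂ : Matrix (Fin k') (Fin m) F)
    (R₃ : Matrix (Fin m) (Fin k') F) (R₄ : Matrix (Fin m) (Fin m) F)
    (hA : IsUnit (Matrix.fromBlocks R₁ R₂ R₃ R₄))
    (hτ1 : (k : ℤ) - (k' : ℤ) ≤ (τ : ℤ)) (hτ2 : (k' : ℤ) - (k : ℤ) ≤ (τ : ℤ))
    (hpar : Even ((k : ℤ) + (k' : ℤ) - (τ : ℤ)))
    (𝒱 : Submodule F (Fin k' ⊕ Fin m → F)) (h𝒱 : Module.finrank F 𝒱 = k) :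
    ((Module.finrank F
          ↥(Submodule.span F
              (Set.range fun i : Fin k' => Matrix.fromCols R₁ R₂ i)) : ℤ)
        + Module.finrank F 𝒱
        - 2 * Module.finrank F
            ↥(Submodule.span F
                (Set.range fun i : Fin k' => Matrix.fromCols R₁ R₂ i) ⊓ 𝒱)
      ≤ (τ : ℤ))
    ↔ ∃ (V₁ : Matrix (Fin k) (Fin k') F)
        (X : Matrix (Fin k) (Fin ((k + τ - k') / 2)) F)
        (Y : Matrix (Fin ((k + τ - k') / 2)) (Fin m) F),
        𝒱 = Submodule.span F (Set.range fun i : Fin k =>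
            Matrix.fromCols (V₁ * R₁ + X * Y * R₃) (V₁ * R₂ + X * Y * R₄) i)
        ∧ (Matrix.fromCols (V₁ * R₁ + X * Y * R₃)
            (V₁ * R₂ + X * Y * R₄)).rank = k :=
  statement15_general F k k' m τ R₁ R₂ R₃ R₄ hA hτ2 𝒱 h𝒱
end

section
/- Let q be a prime power, let k ≤ n − k, and let A and B be k×(n−k) matrices over F_q. Then the subspace distance between the liftings satisfies d_S( rs[ I_k | A ], rs[ I_k | B ] ) = 2·rank(A − B), and the injection distance satisfies d_I( rs[ I_k | A ], rs[ I_k | B ] ) = rank(A − B). Consequently, if C is a set of k×(n−k) matrices over F_q in which any two distinct elements A, B satisfy rank(A−B) ≥ δ, then the lifted code { rs[ I_k | A ] : A ∈ C } is a set of k-dimensional subspaces of F_q^n of the same cardinality as C with minimum pairwise subspace distance at least 2δ. -/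
/-!
A vector of `rs[I_k | A]` is `[x | x A]` for a unique `x ∈ F^k`, so `v ∈ rs[I|A] ∩ rs[I|B]` exactly
when `v = [x | x A]` with `x (A - B) = 0`. The intersection is therefore isomorphic to the left
kernel of `A - B`, of dimension `k - rank (A - B)`, while both liftings have dimension `k`. Both
distances follow, and `rank (A - B) = 0` forces `A = B`, which makes lifting injective.
-/

/-- The lifting of a `k × m` matrix `A`: the row space of `[I_k | A]`,
a subspace of `F^(k+m)` (ambient index type `Fin k ⊕ Fin m`). -/
def lifting (F : Type*) [Field F] (k m : ℕ) (A : Matrix (Fin k) (Fin m) F) :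
    Submodule F (Fin k ⊕ Fin m → F) :=
  Submodule.span F (Set.range fun i : Fin k =>
    Matrix.fromCols (1 : Matrix (Fin k) (Fin k) F) A i)

open Matrix Module

theorem Matrix.eq_zero_of_rank_eq_zero {R m n : Type*} [Field R] [Fintype n] [DecidableEq n]
    {A : Matrix m n R} (h : A.rank = 0) : A = 0 := by
  rw [Matrix.rank, Submodule.finrank_eq_zero, LinearMap.range_eq_bot, ← Matrix.toLin'_apply'] at h
  exact Matrix.toLin'.injective (by simpa using h)

theorem Matrix.finrank_ker_vecMulLinear {R m n : Type*} [Field R] [Fintype m] [Fintype n]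
    (M : Matrix m n R) : finrank R (LinearMap.ker M.vecMulLinear) = Fintype.card m - M.rank := by
  have hrank : finrank R (LinearMap.range M.vecMulLinear) = M.rank := by
    rw [← mulVecLin_transpose, ← rank_transpose M]
    rfl
  have := LinearMap.finrank_range_add_finrank_ker M.vecMulLinear
  rw [hrank, finrank_fintype_fun_eq_card] at this
  omega

section Subspace

variable {F V : Type*} [Field F] [AddCommGroup V] [Module F V]

noncomputable def subspaceDist (U W : Submodule F V) : ℤ :=
  finrank F U + finrank F W - 2 * finrank F ↥(U ⊓ W)

noncomputable def injectionDist (U W : Submodule F V) : ℤ :=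
  max (finrank F U : ℤ) (finrank F W) - finrank F ↥(U ⊓ W)

end Subspace

section Lifting

variable {F : Type*} [Field F] {k m : ℕ}

theorem vecMul_fromCols_one (A : Matrix (Fin k) (Fin m) F) (x : Fin k → F) :
    x ᵥ* fromCols 1 A = Sum.elim x (x ᵥ* A) := by
  rw [vecMul_fromCols, vecMul_one]

theorem lifting_eq_range (A : Matrix (Fin k) (Fin m) F) :
    lifting F k m A = LinearMap.range (fromCols 1 A).vecMulLinear := by
  rw [range_vecMulLinear]
  rfl

theorem vecMulLinear_fromCols_one_injective (A : Matrix (Fin k) (Fin m) F) :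
    Function.Injective (fromCols (1 : Matrix (Fin k) (Fin k) F) A).vecMulLinear := fun x y h => by
  simp only [vecMulLinear_apply, vecMul_fromCols_one, Sum.elim_eq_iff] at h
  exact h.1

theorem finrank_lifting (A : Matrix (Fin k) (Fin m) F) :
    finrank F (lifting F k m A) = k := by
  rw [lifting_eq_range, LinearMap.finrank_range_of_inj (vecMulLinear_fromCols_one_injective A),
    finrank_fin_fun]

theorem lifting_inf_lifting (A B : Matrix (Fin k) (Fin m) F) :
    lifting F k m A ⊓ lifting F k m B
      = (LinearMap.ker (A - B).vecMulLinear).map (fromCols 1 A).vecMulLinear := by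
  ext v
  simp only [lifting_eq_range, Submodule.mem_inf, Submodule.mem_map, LinearMap.mem_range,
    LinearMap.mem_ker, vecMulLinear_apply, vecMul_fromCols_one, vecMul_sub, sub_eq_zero]
  constructor
  · rintro ⟨⟨x, rfl⟩, ⟨y, hy⟩⟩
    obtain ⟨rfl, hAB⟩ := Sum.elim_eq_iff.mp hy
    exact ⟨y, hAB.symm, rfl⟩
  · rintro ⟨x, hAB, rfl⟩
    exact ⟨⟨x, rfl⟩, ⟨x, by rw [hAB]⟩⟩

theorem finrank_lifting_inf_lifting (A B : Matrix (Fin k) (Fin m) F) :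
    finrank F ↥(lifting F k m A ⊓ lifting F k m B) = k - (A - B).rank := by
  rw [lifting_inf_lifting,
    (Submodule.equivMapOfInjective _ (vecMulLinear_fromCols_one_injective A) _).finrank_eq.symm,
    finrank_ker_vecMulLinear, Fintype.card_fin]

theorem subspaceDist_lifting (A B : Matrix (Fin k) (Fin m) F) :
    subspaceDist (lifting F k m A) (lifting F k m B) = 2 * (A - B).rank := by
  have hle : (A - B).rank ≤ k := by simpa using rank_le_card_height (A - B)
  rw [subspaceDist, finrank_lifting, finrank_lifting, finrank_lifting_inf_lifting,
    Nat.cast_sub hle]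
  ring

theorem injectionDist_lifting (A B : Matrix (Fin k) (Fin m) F) :
    injectionDist (lifting F k m A) (lifting F k m B) = (A - B).rank := by
  have hle : (A - B).rank ≤ k := by simpa using rank_le_card_height (A - B)
  rw [injectionDist, finrank_lifting, finrank_lifting, finrank_lifting_inf_lifting, max_self,
    Nat.cast_sub hle]
  ring

theorem lifting_injective : Function.Injective (lifting F k m) := fun A B h => by
  have hdist := subspaceDist_lifting A B
  rw [h, subspaceDist, inf_idem] at hdist
  rw [← sub_eq_zero]
  exact eq_zero_of_rank_eq_zero (by omega)

end Lifting

theorem statement19_general (F : Type*) [Field F] (k m : ℕ) :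
    (∀ A B : Matrix (Fin k) (Fin m) F,
      ((Module.finrank F ↥(lifting F k m A) : ℤ)
          + Module.finrank F ↥(lifting F k m B)
          - 2 * Module.finrank F ↥(lifting F k m A ⊓ lifting F k m B)
        = 2 * ((A - B).rank : ℤ))
      ∧ (max (Module.finrank F ↥(lifting F k m A) : ℤ)
            (Module.finrank F ↥(lifting F k m B))
          - Module.finrank F ↥(lifting F k m A ⊓ lifting F k m B)
        = ((A - B).rank : ℤ)))
    ∧ ∀ (δ : ℕ) (C : Set (Matrix (Fin k) (Fin m) F)),
        (∀ A ∈ C, ∀ B ∈ C, A ≠ B → δ ≤ (A - B).rank) →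
        Set.InjOn (lifting F k m) C
        ∧ (∀ A ∈ C, Module.finrank F ↥(lifting F k m A) = k)
        ∧ ∀ A ∈ C, ∀ B ∈ C, A ≠ B →
            2 * (δ : ℤ) ≤ (Module.finrank F ↥(lifting F k m A) : ℤ)
                + Module.finrank F ↥(lifting F k m B)
                - 2 * Module.finrank F ↥(lifting F k m A ⊓ lifting F k m B) := by
  refine ⟨fun A B => ⟨subspaceDist_lifting A B, injectionDist_lifting A B⟩,
    fun δ C hC => ⟨lifting_injective.injOn, fun A _ => finrank_lifting A, ?_⟩⟩
  intro A hA B hB hAB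
  change 2 * (δ : ℤ) ≤ subspaceDist (lifting F k m A) (lifting F k m B)
  rw [subspaceDist_lifting]
  exact_mod_cast Nat.mul_le_mul_left 2 (hC A hA B hB hAB)

/-- `d_S(rs[I|A], rs[I|B]) = 2·rank(A-B)` and `d_I(rs[I|A], rs[I|B]) = rank(A-B)`;
consequently lifting a rank-metric code with minimum rank distance `δ` yields a
constant dimension code of the same cardinality, of dimension `k`, with minimum
subspace distance at least `2δ`. -/
theorem statement19 (F : Type*) [Field F] [Fintype F] (k m : ℕ) (hkm : k ≤ m) :
    (∀ A B : Matrix (Fin k) (Fin m) F,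
      ((Module.finrank F ↥(lifting F k m A) : ℤ)
          + Module.finrank F ↥(lifting F k m B)
          - 2 * Module.finrank F ↥(lifting F k m A ⊓ lifting F k m B)
        = 2 * ((A - B).rank : ℤ))
      ∧ (max (Module.finrank F ↥(lifting F k m A) : ℤ)
            (Module.finrank F ↥(lifting F k m B))
          - Module.finrank F ↥(lifting F k m A ⊓ lifting F k m B)
        = ((A - B).rank : ℤ)))
    ∧ ∀ (δ : ℕ) (C : Set (Matrix (Fin k) (Fin m) F)),
        (∀ A ∈ C, ∀ B ∈ C, A ≠ B → δ ≤ (A - B).rank) →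
        Set.InjOn (lifting F k m) C
        ∧ (∀ A ∈ C, Module.finrank F ↥(lifting F k m A) = k)
        ∧ ∀ A ∈ C, ∀ B ∈ C, A ≠ B →
            2 * (δ : ℤ) ≤ (Module.finrank F ↥(lifting F k m A) : ℤ)
                + Module.finrank F ↥(lifting F k m B)
                - 2 * Module.finrank F ↥(lifting F k m A ⊓ lifting F k m B) :=
  statement19_general F k m
end
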